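/- The profile p_0 is the unique subgame perfect equilibrium of the ∞pede: for every finite-or-infinite strategy profile s, (s =_g p_0 ∧ SPE(s)) if and only if s = p_0. -/

import Mathlib

noncomputable section

/-- The two agents. -/
inductive Ag : Type
  | A
  | B
deriving DecidableEq

/-- The set of choices `{1, 2}`. -/
inductive Choice : Type
  | one
  | two
deriving DecidableEq

/-- The polynomial functor whose final coalgebra is the set of finite or
infinite strategy profiles: a node is either an ending position carrying a
utility assignment (no children) or an internal position carrying an agent
and a choice (two children, indexed by `Bool`). -/
def SPF (Agent : Type) : PFunctor.{0} :=
  ⟨(Agent → ℝ) ⊕ (Agent × Choice), fun x => Sum.rec (fun _ => Empty) (fun _ => Bool) x⟩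

/-- Finite or infinite strategy profiles, as the M-type (final coalgebra). -/
def StratProf (Agent : Type) : Type :=
  (SPF Agent).M

/-- The ending position `⟨u⟩`. -/
def leafP {Agent : Type} (u : Agent → ℝ) : StratProf Agent :=
  PFunctor.M.mk ⟨Sum.inl u, fun e => Empty.elim e⟩

/-- The strategy profile `⟨a, c, s₁, s₂⟩`. -/
def nodeP {Agent : Type} (a : Agent) (c : Choice) (s₁ s₂ : StratProf Agent) :
    StratProf Agent :=
  PFunctor.M.mk ⟨Sum.inr (a, c), fun b => bif b then s₂ else s₁⟩

/-- The child selected by choice `c`. -/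
def cchild {Agent : Type} (c : Choice) (s₁ s₂ : StratProf Agent) : StratProf Agent :=
  match c with
  | .one => s₁
  | .two => s₂

/-- `conv s`: following the choices of `s` reaches an ending position after
finitely many steps (inductive definition). -/
inductive Conv {Agent : Type} : StratProf Agent → Prop
  | leaf (u : Agent → ℝ) : Conv (leafP u)
  | node1 (a : Agent) (s₁ s₂ : StratProf Agent) :
      Conv s₁ → Conv (nodeP a Choice.one s₁ s₂)
  | node2 (a : Agent) (s₁ s₂ : StratProf Agent) :
      Conv s₂ → Conv (nodeP a Choice.two s₁ s₂)

/-- The graph of the (partial) utility assignment `ŝ`: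
`UtilR s u` holds iff following the choices of `s` reaches the ending
position `⟨u⟩`. -/
inductive UtilR {Agent : Type} : StratProf Agent → (Agent → ℝ) → Prop
  | leaf (u : Agent → ℝ) : UtilR (leafP u) u
  | node1 (a : Agent) (s₁ s₂ : StratProf Agent) (u : Agent → ℝ) :
      UtilR s₁ u → UtilR (nodeP a Choice.one s₁ s₂) u
  | node2 (a : Agent) (s₁ s₂ : StratProf Agent) (u : Agent → ℝ) :
      UtilR s₂ u → UtilR (nodeP a Choice.two s₁ s₂) u

open Classical in
/-- The utility assignment `ŝ` (an arbitrary default on non-convergent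
profiles). -/
def util {Agent : Type} (s : StratProf Agent) : Agent → ℝ :=
  if h : ∃ u, UtilR s u then h.choose else fun _ => 0

/-- `□P`, the coinductive `always` modality: `P` holds at every position of
the strategy profile (greatest fixed point). -/
def Always {Agent : Type} (P : StratProf Agent → Prop) (s : StratProf Agent) : Prop :=
  ∃ R : StratProf Agent → Prop, R s ∧ ∀ t, R t →
    P t ∧ ∀ a c s₁ s₂, t = nodeP a c s₁ s₂ → R s₁ ∧ R s₂

/-- `PE s`: `s` is always-convergent and the choice at the root of `s` is at
least as good, for the agent who owns the root, as the other choice. -/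
def PE {Agent : Type} (s : StratProf Agent) : Prop :=
  Always Conv s ∧
    (∀ a s₁ s₂, s = nodeP a Choice.one s₁ s₂ → util s₁ a ≥ util s₂ a) ∧
    (∀ a s₁ s₂, s = nodeP a Choice.two s₁ s₂ → util s₂ a ≥ util s₁ a)

/-- Subgame perfect equilibrium: `□PE`. -/
def SPE {Agent : Type} : StratProf Agent → Prop :=
  Always PE

/-- `s =_g s'`: the two strategy profiles have the same underlying game
(coinductive definition). -/
def SameGame {Agent : Type} (s s' : StratProf Agent) : Prop :=
  ∃ R : StratProf Agent → StratProf Agent → Prop, R s s' ∧ ∀ t t', R t t' →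
    (∃ u, t = leafP u ∧ t' = leafP u) ∨
    (∃ a c c' s₁ s₂ s₁' s₂',
      t = nodeP a c s₁ s₂ ∧ t' = nodeP a c' s₁' s₂' ∧ R s₁ s₁' ∧ R s₂ s₂')

/-- `Rat_∞`: rationality for finite or infinite strategy profiles
(coinductive definition). -/
def RatInf {Agent : Type} (s : StratProf Agent) : Prop :=
  ∃ R : StratProf Agent → Prop, R s ∧ ∀ t, R t →
    (∃ u, t = leafP u) ∨
    (∃ a c s₁ s₂ s₁' s₂', t = nodeP a c s₁ s₂ ∧
      SameGame (nodeP a c s₁' s₂') (nodeP a c s₁ s₂) ∧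
      SPE (nodeP a c s₁' s₂') ∧ R (cchild c s₁ s₂))

/-- `diverg`: following the choices never reaches an ending position
(coinductive definition). -/
def Diverg {Agent : Type} (s : StratProf Agent) : Prop :=
  ∃ R : StratProf Agent → Prop, R s ∧ ∀ t, R t →
    ∃ a c s₁ s₂, t = nodeP a c s₁ s₂ ∧ R (cchild c s₁ s₂)

/-- Utilities of the leaf reached when Alice takes at her `n`-th position of
the ∞pede: `A ↦ 2^(2n+2)`, `B ↦ 2^(2n)`. -/
def uAp (n : ℕ) : Ag → ℝ := fun x =>
  match x with
  | Ag.A => (2 : ℝ) ^ (2 * n + 2)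
  | Ag.B => (2 : ℝ) ^ (2 * n)

/-- Utilities of the leaf reached when Bob takes at his `n`-th position of
the ∞pede: `A ↦ 2^(2n+1)`, `B ↦ 2^(2n+3)`. -/
def uBp (n : ℕ) : Ag → ℝ := fun x =>
  match x with
  | Ag.A => (2 : ℝ) ^ (2 * n + 1)
  | Ag.B => (2 : ℝ) ^ (2 * n + 3)

/-- States for the mutual corecursion defining the `always take` profiles
`p_n` and `π_n` of the ∞pede. -/
inductive PedSt : Type
  | pS (n : ℕ)
  | piS (n : ℕ)
  | lS (u : Ag → ℝ)

/-- One step of the corecursion: `p_n = ⟨A, 1, ⟨A↦2^(2n+2), B↦2^(2n)⟩, π_n⟩`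
and `π_n = ⟨B, 1, ⟨A↦2^(2n+1), B↦2^(2n+3)⟩, p_{n+1}⟩`. -/
def pedStep : PedSt → (SPF Ag).Obj PedSt
  | PedSt.lS u => ⟨Sum.inl u, fun e => Empty.elim e⟩
  | PedSt.pS n =>
      ⟨Sum.inr (Ag.A, Choice.one), fun b => bif b then PedSt.piS n else PedSt.lS (uAp n)⟩
  | PedSt.piS n =>
      ⟨Sum.inr (Ag.B, Choice.one), fun b => bif b then PedSt.pS (n + 1) else PedSt.lS (uBp n)⟩

/-- The ∞pede profile `p_n` where both agents always take. -/
def pped (n : ℕ) : StratProf Ag :=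
  PFunctor.M.corec pedStep (PedSt.pS n)

/-- The ∞pede profile `π_n` where both agents always take. -/
def piped (n : ℕ) : StratProf Ag :=
  PFunctor.M.corec pedStep (PedSt.piS n)

/-! Taking at every position is an equilibrium of every subgame, since at each position the
leaf pays the mover more than the leaf at the next position. Conversely, an SPE `s` with the
game of the ∞pede converges, and backward induction along its finite play shows that it takes at
the root: continuing would lead into a subgame whose equilibria take immediately, which the mover
strictly dislikes. The subgames of `s` being again SPEs of ∞pede subgames, `s` is bisimilar, hence
equal, to `p_0`. The argument applies to any always-take profile of this shape in which each
mover strictly prefers taking to the leaf at the next position. -/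

open PFunctor

section Profiles

variable {Agent : Type}

theorem leafP_inj {u v : Agent → ℝ} : leafP u = leafP v ↔ u = v := by
  refine ⟨fun h => ?_, fun h => h ▸ rfl⟩
  exact Sum.inl.inj (congrArg Sigma.fst (M.mk_inj h))

theorem nodeP_inj {a a' : Agent} {c c' : Choice} {s₁ s₂ s₁' s₂' : StratProf Agent} :
    nodeP a c s₁ s₂ = nodeP a' c' s₁' s₂' ↔ a = a' ∧ c = c' ∧ s₁ = s₁' ∧ s₂ = s₂' := by
  refine ⟨fun h => ?_, by rintro ⟨rfl, rfl, rfl, rfl⟩; rfl⟩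
  obtain ⟨hac, hs⟩ := Sigma.mk.inj_iff.mp (M.mk_inj h)
  obtain ⟨rfl, rfl⟩ := Prod.mk.inj (Sum.inr.inj hac)
  have hs : (fun b : Bool => bif b then s₂ else s₁) = fun b => bif b then s₂' else s₁' :=
    eq_of_heq hs
  exact ⟨rfl, rfl, congrFun hs false, congrFun hs true⟩

theorem leafP_ne_nodeP (u : Agent → ℝ) (a : Agent) (c : Choice) (s₁ s₂ : StratProf Agent) :
    leafP u ≠ nodeP a c s₁ s₂ := fun h => by
  simpa using congrArg Sigma.fst (M.mk_inj h)

theorem StratProf.leaf_or_node (t : StratProf Agent) :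
    (∃ u, t = leafP u) ∨ ∃ a c s₁ s₂, t = nodeP a c s₁ s₂ := by
  refine M.casesOn' (r := fun t => (∃ u, t = leafP u) ∨ ∃ a c s₁ s₂, t = nodeP a c s₁ s₂) t ?_
  rintro (u | ⟨a, c⟩) f
  · exact Or.inl ⟨u, congrArg M.mk (congrArg _ (funext fun e => e.elim))⟩
  · refine Or.inr ⟨a, c, f false, f true, congrArg M.mk (congrArg _ (funext fun b => ?_))⟩
    cases b <;> rfl

theorem StratProf.eq_of_bisim (R : StratProf Agent → StratProf Agent → Prop)
    (h : ∀ x y, R x y → (∃ u, x = leafP u ∧ y = leafP u) ∨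
      ∃ a c s₁ s₂ t₁ t₂, x = nodeP a c s₁ s₂ ∧ y = nodeP a c t₁ t₂ ∧ R s₁ t₁ ∧ R s₂ t₂)
    {x y : StratProf Agent} (hxy : R x y) : x = y := by
  refine M.bisim R (fun x y hxy => ?_) x y hxy
  rcases h x y hxy with ⟨u, rfl, rfl⟩ | ⟨a, c, s₁, s₂, t₁, t₂, rfl, rfl, h₁, h₂⟩
  · exact ⟨Sum.inl u, _, _, M.dest_mk _, M.dest_mk _, fun e => e.elim⟩
  · refine ⟨Sum.inr (a, c), _, _, M.dest_mk _, M.dest_mk _, fun b => ?_⟩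
    cases b
    exacts [h₁, h₂]

theorem Always.self {P : StratProf Agent → Prop} {s : StratProf Agent} (h : Always P s) : P s :=
  let ⟨_, hR, hinv⟩ := h
  (hinv s hR).1

theorem Always.of_nodeP {P : StratProf Agent → Prop} {a : Agent} {c : Choice}
    {s₁ s₂ : StratProf Agent} (h : Always P (nodeP a c s₁ s₂)) : Always P s₁ ∧ Always P s₂ :=
  let ⟨R, hR, hinv⟩ := h
  let ⟨h₁, h₂⟩ := (hinv _ hR).2 a c s₁ s₂ rfl
  ⟨⟨R, h₁, hinv⟩, ⟨R, h₂, hinv⟩⟩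

theorem SPE.conv {s : StratProf Agent} (h : SPE s) : Conv s :=
  h.self.1.self

theorem utilR_leafP_iff {u v : Agent → ℝ} : UtilR (leafP u) v ↔ v = u := by
  refine ⟨fun h => ?_, fun h => h ▸ UtilR.leaf u⟩
  generalize ht : leafP u = t at h
  cases h with
  | leaf w => exact (leafP_inj.mp ht).symm
  | node1 | node2 => exact absurd ht (leafP_ne_nodeP _ _ _ _ _)

theorem utilR_nodeP_iff {a : Agent} {c : Choice} {s₁ s₂ : StratProf Agent} {v : Agent → ℝ} :
    UtilR (nodeP a c s₁ s₂) v ↔ UtilR (cchild c s₁ s₂) v := by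
  refine ⟨fun h => ?_, fun h => ?_⟩
  · generalize ht : nodeP a c s₁ s₂ = t at h
    cases h with
    | leaf w => exact absurd ht.symm (leafP_ne_nodeP _ _ _ _ _)
    | node1 _ _ _ _ h | node2 _ _ _ _ h =>
      obtain ⟨-, rfl, rfl, rfl⟩ := nodeP_inj.mp ht
      exact h
  · cases c
    exacts [UtilR.node1 _ _ _ _ h, UtilR.node2 _ _ _ _ h]

theorem UtilR.unique {s : StratProf Agent} {u v : Agent → ℝ} (hu : UtilR s u) (hv : UtilR s v) :
    u = v := by
  induction hu generalizing v with
  | leaf w => exact (utilR_leafP_iff.mp hv).symm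
  | node1 _ _ _ _ _ ih | node2 _ _ _ _ _ ih => exact ih (utilR_nodeP_iff.mp hv)

theorem UtilR.util_eq {s : StratProf Agent} {u : Agent → ℝ} (h : UtilR s u) : util s = u := by
  have hex : ∃ u, UtilR s u := ⟨u, h⟩
  rw [util, dif_pos hex]
  exact hex.choose_spec.unique h

theorem util_leafP (u : Agent → ℝ) : util (leafP u) = u :=
  (UtilR.leaf u).util_eq

theorem util_nodeP_one_leafP (a : Agent) (u : Agent → ℝ) (s : StratProf Agent) :
    util (nodeP a Choice.one (leafP u) s) = u :=
  (UtilR.node1 _ _ _ _ (UtilR.leaf u)).util_eq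

theorem SameGame.refl (s : StratProf Agent) : SameGame s s := by
  refine ⟨Eq, rfl, ?_⟩
  rintro t _ rfl
  rcases t.leaf_or_node with ⟨u, rfl⟩ | ⟨a, c, s₁, s₂, rfl⟩
  exacts [Or.inl ⟨u, rfl, rfl⟩, Or.inr ⟨a, c, c, s₁, s₂, s₁, s₂, rfl, rfl, rfl, rfl⟩]

theorem SameGame.eq_leafP {s : StratProf Agent} {u : Agent → ℝ} (h : SameGame s (leafP u)) :
    s = leafP u := by
  obtain ⟨R, hR, hinv⟩ := h
  rcases hinv _ _ hR with ⟨v, rfl, hv⟩ | ⟨_, _, _, _, _, _, _, -, hu, -⟩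
  exacts [leafP_inj.mpr (leafP_inj.mp hv).symm, absurd hu (leafP_ne_nodeP _ _ _ _ _)]

theorem SameGame.exists_eq_nodeP {s : StratProf Agent} {a : Agent} {c' : Choice}
    {s₁' s₂' : StratProf Agent} (h : SameGame s (nodeP a c' s₁' s₂')) :
    ∃ c s₁ s₂, s = nodeP a c s₁ s₂ ∧ SameGame s₁ s₁' ∧ SameGame s₂ s₂' := by
  obtain ⟨R, hR, hinv⟩ := h
  rcases hinv _ _ hR with ⟨u, -, hu⟩ | ⟨_, c, _, s₁, s₂, _, _, rfl, h', h₁, h₂⟩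
  · exact absurd hu.symm (leafP_ne_nodeP _ _ _ _ _)
  · obtain ⟨rfl, -, rfl, rfl⟩ := nodeP_inj.mp h'
    exact ⟨c, s₁, s₂, rfl, ⟨R, h₁, hinv⟩, ⟨R, h₂, hinv⟩⟩

end Profiles

namespace Centipede

variable {Agent : Type} {ι : Type*} {next : ι → ι} {g : ι → StratProf Agent} {a : ι → Agent}
  {u : ι → Agent → ℝ}

theorem spe_of_le (hg : ∀ i, g i = nodeP (a i) Choice.one (leafP (u i)) (g (next i)))
    (hu : ∀ i, u (next i) (a i) ≤ u i (a i)) (i : ι) : SPE (g i) := by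
  let R : StratProf Agent → Prop := fun t => (∃ j, t = g j) ∨ ∃ v, t = leafP v
  have hR : ∀ t, R t → ∀ b c s₁ s₂, t = nodeP b c s₁ s₂ → R s₁ ∧ R s₂ := by
    rintro t (⟨j, rfl⟩ | ⟨v, rfl⟩) b c s₁ s₂ h
    · obtain ⟨-, -, rfl, rfl⟩ := nodeP_inj.mp ((hg j).symm.trans h)
      exact ⟨Or.inr ⟨u j, rfl⟩, Or.inl ⟨next j, rfl⟩⟩
    · exact absurd h (leafP_ne_nodeP _ _ _ _ _)
  have hconv : ∀ t, R t → Conv t := by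
    rintro t (⟨j, rfl⟩ | ⟨v, rfl⟩)
    · rw [hg]
      exact Conv.node1 _ _ _ (Conv.leaf _)
    · exact Conv.leaf v
  have hPE : ∀ t, R t → PE t := by
    intro t ht
    refine ⟨⟨R, ht, fun t ht => ⟨hconv t ht, hR t ht⟩⟩, ?_, ?_⟩ <;> intro b s₁ s₂ h <;>
      obtain ⟨j, rfl⟩ | ⟨v, rfl⟩ := ht
    · obtain ⟨rfl, -, rfl, rfl⟩ := nodeP_inj.mp ((hg j).symm.trans h)
      rw [util_leafP, hg, util_nodeP_one_leafP]
      exact hu j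
    · exact absurd h (leafP_ne_nodeP _ _ _ _ _)
    · exact absurd (nodeP_inj.mp ((hg j).symm.trans h)).2.1 (by decide)
    · exact absurd h (leafP_ne_nodeP _ _ _ _ _)
  exact ⟨R, Or.inl ⟨i, rfl⟩, fun t ht => ⟨hPE t ht, hR t ht⟩⟩

theorem exists_eq_nodeP_of_sameGame
    (hg : ∀ i, g i = nodeP (a i) Choice.one (leafP (u i)) (g (next i)))
    {s : StratProf Agent} {i : ι} (h : SameGame s (g i)) :
    ∃ c t, s = nodeP (a i) c (leafP (u i)) t ∧ SameGame t (g (next i)) := by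
  rw [hg] at h
  obtain ⟨c, s₁, t, rfl, h₁, h₂⟩ := h.exists_eq_nodeP
  exact ⟨c, t, by rw [h₁.eq_leafP], h₂⟩

theorem exists_eq_take_of_spe (hg : ∀ i, g i = nodeP (a i) Choice.one (leafP (u i)) (g (next i)))
    (hu : ∀ i, u (next i) (a i) < u i (a i)) {s : StratProf Agent} {i : ι} (hs : SPE s)
    (h : SameGame s (g i)) :
    ∃ t, s = nodeP (a i) Choice.one (leafP (u i)) t ∧ SameGame t (g (next i)) := by
  induction hs.conv generalizing i with
  | leaf v =>
    obtain ⟨_, _, hv, -⟩ := exists_eq_nodeP_of_sameGame hg h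
    exact absurd hv (leafP_ne_nodeP _ _ _ _ _)
  | node1 =>
    obtain ⟨_, _, ht, ht'⟩ := exists_eq_nodeP_of_sameGame hg h
    obtain ⟨rfl, -, rfl, rfl⟩ := nodeP_inj.mp ht
    exact ⟨_, rfl, ht'⟩
  | node2 _ _ _ _ ih =>
    obtain ⟨_, _, ht, ht'⟩ := exists_eq_nodeP_of_sameGame hg h
    obtain ⟨rfl, -, rfl, rfl⟩ := nodeP_inj.mp ht
    obtain ⟨_, rfl, -⟩ := ih hs.of_nodeP.2 ht'
    have hge := hs.self.2.2 (a i) _ _ rfl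
    rw [util_leafP, util_nodeP_one_leafP] at hge
    exact absurd hge (hu i).not_ge

theorem eq_of_spe_of_sameGame
    (hg : ∀ i, g i = nodeP (a i) Choice.one (leafP (u i)) (g (next i)))
    (hu : ∀ i, u (next i) (a i) < u i (a i)) {s : StratProf Agent} {i : ι} (hs : SPE s)
    (h : SameGame s (g i)) : s = g i := by
  refine StratProf.eq_of_bisim
    (fun x y => (∃ j, SPE x ∧ SameGame x (g j) ∧ y = g j) ∨ ∃ v, x = leafP v ∧ y = leafP v)
    ?_ (Or.inl ⟨i, hs, h, rfl⟩)
  rintro x y (⟨j, hx, hxy, rfl⟩ | ⟨v, rfl, rfl⟩)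
  · obtain ⟨t, rfl, ht⟩ := exists_eq_take_of_spe hg hu hx hxy
    exact Or.inr ⟨_, _, _, _, _, _, rfl, hg j, Or.inr ⟨u j, rfl, rfl⟩,
      Or.inl ⟨next j, hx.of_nodeP.2, ht, rfl⟩⟩
  · exact Or.inl ⟨v, rfl, rfl⟩

theorem sameGame_and_spe_iff
    (hg : ∀ i, g i = nodeP (a i) Choice.one (leafP (u i)) (g (next i)))
    (hu : ∀ i, u (next i) (a i) < u i (a i)) {s : StratProf Agent} {i : ι} :
    SameGame s (g i) ∧ SPE s ↔ s = g i := by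
  refine ⟨fun h => eq_of_spe_of_sameGame hg hu h.2 h.1, ?_⟩
  rintro rfl
  exact ⟨SameGame.refl _, spe_of_le hg (fun i => (hu i).le) i⟩

end Centipede

theorem corec_pedStep_lS (u : Ag → ℝ) : M.corec pedStep (PedSt.lS u) = leafP u := by
  rw [M.corec_def]
  show M.mk (F := SPF Ag) ⟨Sum.inl u, _⟩ = _
  congr 2
  funext e
  exact e.elim

theorem pped_eq (n : ℕ) : pped n = nodeP Ag.A Choice.one (leafP (uAp n)) (piped n) := by
  rw [pped, M.corec_def]
  show M.mk (F := SPF Ag) ⟨Sum.inr (Ag.A, Choice.one), _⟩ = _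
  congr 2
  funext b
  cases b
  exacts [corec_pedStep_lS _, rfl]

theorem piped_eq (n : ℕ) : piped n = nodeP Ag.B Choice.one (leafP (uBp n)) (pped (n + 1)) := by
  rw [piped, M.corec_def]
  show M.mk (F := SPF Ag) ⟨Sum.inr (Ag.B, Choice.one), _⟩ = _
  congr 2
  funext b
  cases b
  exacts [corec_pedStep_lS _, rfl]

/-- Successor on the positions of the ∞pede, `inl n` standing for `p_n` and `inr n` for `π_n`. -/
def pedNext : ℕ ⊕ ℕ → ℕ ⊕ ℕ
  | .inl n => .inr n
  | .inr n => .inl (n + 1)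

/-- `p_0` is the unique subgame perfect equilibrium of the ∞pede: for every
strategy profile `s`, `s =_g p_0 ∧ SPE(s)` iff `s = p_0`. -/
theorem pped_zero_unique_spe (s : StratProf Ag) :
    (SameGame s (pped 0) ∧ SPE s) ↔ s = pped 0 := by
  refine Centipede.sameGame_and_spe_iff (next := pedNext) (g := Sum.elim pped piped)
    (a := Sum.elim (fun _ => Ag.A) (fun _ => Ag.B)) (u := Sum.elim uAp uBp) (i := .inl 0)
    ?_ ?_
  · rintro (n | n)
    exacts [pped_eq n, piped_eq n]
  · rintro (n | n) <;> simp only [pedNext, Sum.elim_inl, Sum.elim_inr, uAp, uBp] <;>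
      exact pow_lt_pow_right₀ one_lt_two (by omega)
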